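/- Let 0 < m1 ≤ m2 ≤ m3 with m1 + m2 + m3 = 1, assume m1 + m2 < m3, and let m1 + m2 ≤ α ≤ 1/2 with 2·α − m1 − m2 > 0. Let S(α) = {x ∈ [0,1]³ : m1·x1 + m2·x2 + m3·x3 ≤ α} and let c_j = (∫_{S(α)} x_j dλ)/λ(S(α)) denote the coordinates of its centroid. Then c1 = 1/2 − m1/(6·(2·α − m1 − m2)), c2 = 1/2 − m2/(6·(2·α − m1 − m2)), and c3 = [6·α² − 6·α·(m1 + m2) + 2·(m1² + m2²) + 3·m1·m2]/(6·m3·(2·α − m1 − m2)). -/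

import Mathlib

open MeasureTheory

lemma integral_Icc01_poly (a b c : ℝ) :
    ∫ t in Set.Icc (0:ℝ) 1, (a + b*t + c*t^2) = a + b/2 + c/3 := by
  rw [integral_Icc_eq_integral_Ioc, ← intervalIntegral.integral_of_le zero_le_one]
  have h1 : IntervalIntegrable (fun _ : ℝ => a) volume 0 1 := intervalIntegrable_const
  have h2 : IntervalIntegrable (fun t : ℝ => b * t) volume 0 1 :=
    (continuous_const.mul continuous_id).intervalIntegrable 0 1
  have h3 : IntervalIntegrable (fun t : ℝ => c * t^2) volume 0 1 :=
    (continuous_const.mul (continuous_pow 2)).intervalIntegrable 0 1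
  rw [intervalIntegral.integral_add (h1.add h2) h3, intervalIntegral.integral_add h1 h2,
    intervalIntegral.integral_const, intervalIntegral.integral_const_mul,
    intervalIntegral.integral_const_mul, integral_id, integral_pow]
  norm_num
  ring

lemma integral_Icc_const (c k : ℝ) (hc : 0 ≤ c) :
    ∫ _ in Set.Icc (0:ℝ) c, k = c * k := by
  rw [setIntegral_const, measureReal_def, Real.volume_Icc, smul_eq_mul, ENNReal.toReal_ofReal (by linarith)]
  ring

lemma integral_Icc_id (c : ℝ) (hc : 0 ≤ c) :
    ∫ z in Set.Icc (0:ℝ) c, z = c^2/2 := by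
  rw [integral_Icc_eq_integral_Ioc, ← intervalIntegral.integral_of_le hc, integral_id]
  ring


lemma cut_integral (m1 m2 m3 α : ℝ) (hm3 : 0 < m3)
    (hc : ∀ x ∈ Set.Icc (0:ℝ) 1, ∀ y ∈ Set.Icc (0:ℝ) 1,
      (α - m1*x - m2*y)/m3 ∈ Set.Icc (0:ℝ) 1)
    (g : ℝ → ℝ → ℝ → ℝ) (hg : Continuous fun p : ℝ × ℝ × ℝ => g p.1 p.2.1 p.2.2) :
    ∫ p in {p : ℝ×ℝ×ℝ | p.1 ∈ Set.Icc 0 1 ∧ p.2.1 ∈ Set.Icc 0 1 ∧ p.2.2 ∈ Set.Icc 0 1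
        ∧ m1*p.1+m2*p.2.1+m3*p.2.2 ≤ α}, g p.1 p.2.1 p.2.2
    = ∫ x in Set.Icc (0:ℝ) 1, ∫ y in Set.Icc (0:ℝ) 1,
        ∫ z in Set.Icc 0 ((α - m1*x - m2*y)/m3), g x y z := by
  set T : Set (ℝ×ℝ×ℝ) := {p | m1*p.1+m2*p.2.1+m3*p.2.2 ≤ α} with hT
  have hTm : MeasurableSet T := by
    apply measurableSet_le
    · fun_prop
    · fun_prop
  have hSeq : {p : ℝ×ℝ×ℝ | p.1 ∈ Set.Icc 0 1 ∧ p.2.1 ∈ Set.Icc 0 1 ∧ p.2.2 ∈ Set.Icc 0 1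
        ∧ m1*p.1+m2*p.2.1+m3*p.2.2 ≤ α}
      = (Set.Icc (0:ℝ) 1 ×ˢ (Set.Icc (0:ℝ) 1 ×ˢ Set.Icc (0:ℝ) 1)) ∩ T := by
    ext p; simp only [Set.mem_setOf_eq, Set.mem_inter_iff, Set.mem_prod, hT]; tauto
  rw [hSeq, ← setIntegral_indicator hTm]
  have hint : IntegrableOn (fun p : ℝ×ℝ×ℝ => T.indicator (fun q => g q.1 q.2.1 q.2.2) p)
      (Set.Icc (0:ℝ) 1 ×ˢ (Set.Icc (0:ℝ) 1 ×ˢ Set.Icc (0:ℝ) 1)) volume := by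
    apply Integrable.indicator _ hTm
    exact hg.continuousOn.integrableOn_compact
      (isCompact_Icc.prod (isCompact_Icc.prod isCompact_Icc))
  rw [Measure.volume_eq_prod, setIntegral_prod _ hint]
  apply setIntegral_congr_fun (measurableSet_Icc)
  intro x hx
  simp only
  have hint2 : IntegrableOn (fun q : ℝ×ℝ => T.indicator (fun p : ℝ×ℝ×ℝ => g p.1 p.2.1 p.2.2) (x, q))
      (Set.Icc (0:ℝ) 1 ×ˢ Set.Icc (0:ℝ) 1) volume := by
    apply Integrable.indicator
    · exact ((hg.comp (Continuous.prodMk_right x)).continuousOn).integrableOn_compact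
        (isCompact_Icc.prod isCompact_Icc)
    · exact (hTm.preimage (Continuous.prodMk_right x).measurable)
  rw [show (volume : Measure (ℝ×ℝ)) = (volume : Measure ℝ).prod volume from rfl,
    setIntegral_prod _ hint2]
  apply setIntegral_congr_fun (measurableSet_Icc)
  intro y hy
  simp only
  have hcc := hc x hx y hy
  have key : ∀ z : ℝ, T.indicator (fun p : ℝ×ℝ×ℝ => g p.1 p.2.1 p.2.2) (x, y, z)
      = (Set.Iic ((α - m1*x - m2*y)/m3)).indicator (fun z => g x y z) z := by
    intro z
    simp only [Set.indicator_apply, hT, Set.mem_setOf_eq, Set.mem_Iic]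
    congr 1
    simp only [eq_iff_iff, le_div_iff₀ hm3]
    constructor <;> intro h <;> nlinarith
  rw [show (fun y_1 => T.indicator (fun p : ℝ×ℝ×ℝ => g p.1 p.2.1 p.2.2) (x, y, y_1))
      = fun z => (Set.Iic ((α - m1*x - m2*y)/m3)).indicator (fun z => g x y z) z from funext key]
  rw [setIntegral_indicator measurableSet_Iic]
  have hset : Set.Icc (0:ℝ) 1 ∩ Set.Iic ((α - m1*x - m2*y)/m3)
      = Set.Icc 0 ((α - m1*x - m2*y)/m3) := by
    ext z
    simp only [Set.mem_inter_iff, Set.mem_Icc, Set.mem_Iic]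
    exact ⟨fun h => ⟨h.1.1, h.2⟩, fun h => ⟨⟨h.1, h.2.trans hcc.2⟩, h.2⟩⟩
  rw [hset]

/-- Configuration 5 (second quadrilateral cut interface): centroid of the cut
region of the unit cube when `m1 + m2 < m3` and `m1 + m2 ≤ α ≤ 1/2`. -/
theorem cut_centroid_config5 (m1 m2 m3 α : ℝ)
    (hm1 : 0 < m1) (hm12 : m1 ≤ m2) (hm23 : m2 ≤ m3)
    (hsum : m1 + m2 + m3 = 1) (hcfg : m1 + m2 < m3)
    (hα0 : m1 + m2 ≤ α) (hα1 : α ≤ 1 / 2) (hpos : 0 < 2 * α - m1 - m2)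
    (S : Set (ℝ × ℝ × ℝ))
    (hS : S = {p : ℝ × ℝ × ℝ | p.1 ∈ Set.Icc 0 1 ∧ p.2.1 ∈ Set.Icc 0 1 ∧
        p.2.2 ∈ Set.Icc 0 1 ∧ m1 * p.1 + m2 * p.2.1 + m3 * p.2.2 ≤ α}) :
    (∫ p in S, p.1) / (volume S).toReal =
      1 / 2 - m1 / (6 * (2 * α - m1 - m2)) ∧
    (∫ p in S, p.2.1) / (volume S).toReal =
      1 / 2 - m2 / (6 * (2 * α - m1 - m2)) ∧
    (∫ p in S, p.2.2) / (volume S).toReal =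
      (6 * α ^ 2 - 6 * α * (m1 + m2) + 2 * (m1 ^ 2 + m2 ^ 2) + 3 * m1 * m2) /
        (6 * m3 * (2 * α - m1 - m2)) := by
  have hm3 : 0 < m3 := by linarith
  have hm3' : m3 ≠ 0 := ne_of_gt hm3
  have hm3h : 1/2 < m3 := by linarith
  have hc : ∀ x ∈ Set.Icc (0:ℝ) 1, ∀ y ∈ Set.Icc (0:ℝ) 1,
      (α - m1*x - m2*y)/m3 ∈ Set.Icc (0:ℝ) 1 := by
    intro x hx y hy
    obtain ⟨hx0, hx1⟩ := hx
    obtain ⟨hy0, hy1⟩ := hy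
    constructor
    · apply div_nonneg _ (le_of_lt hm3)
      nlinarith
    · rw [div_le_one hm3]
      nlinarith
  -- Volume
  have hV : (volume S).toReal = (2*α - m1 - m2)/(2*m3) := by
    have h1 : (volume S).toReal = ∫ p in S, (1:ℝ) := by
      rw [setIntegral_const, smul_eq_mul, mul_one, measureReal_def]
    rw [h1, hS]
    have := cut_integral m1 m2 m3 α hm3 hc (fun _ _ _ => (1:ℝ)) continuous_const
    rw [this]
    have step1 : ∫ x in Set.Icc (0:ℝ) 1, (∫ y in Set.Icc (0:ℝ) 1,
        ∫ _ in Set.Icc 0 ((α - m1*x - m2*y)/m3), (1:ℝ))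
        = ∫ x in Set.Icc (0:ℝ) 1,
          ((α/m3 - m2/(2*m3)) + (-(m1/m3))*x + 0*x^2) := by
      apply setIntegral_congr_fun measurableSet_Icc
      intro x hx
      simp only
      have inner : ∀ y ∈ Set.Icc (0:ℝ) 1,
          (∫ _ in Set.Icc 0 ((α - m1*x - m2*y)/m3), (1:ℝ))
          = ((α - m1*x)/m3 + (-(m2/m3))*y + 0*y^2) := by
        intro y hy
        rw [integral_Icc_const _ _ (hc x hx y hy).1]
        ring
      rw [setIntegral_congr_fun measurableSet_Icc inner, integral_Icc01_poly]
      ring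
    rw [step1, integral_Icc01_poly]
    field_simp
    ring
  have hVpos : (0:ℝ) < (2*α - m1 - m2)/(2*m3) := by positivity
  -- First moment
  have hI1 : ∫ p in S, p.1 = (α/m3 - m2/(2*m3))/2 + (-(m1/m3))/3 := by
    rw [hS]
    have key := cut_integral m1 m2 m3 α hm3 hc (fun x _ _ => x) continuous_fst
    rw [show (∫ p in {p : ℝ×ℝ×ℝ | p.1 ∈ Set.Icc 0 1 ∧ p.2.1 ∈ Set.Icc 0 1 ∧
        p.2.2 ∈ Set.Icc 0 1 ∧ m1*p.1+m2*p.2.1+m3*p.2.2 ≤ α}, p.1)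
        = ∫ x in Set.Icc (0:ℝ) 1, ∫ y in Set.Icc (0:ℝ) 1,
          ∫ _ in Set.Icc 0 ((α - m1*x - m2*y)/m3), x from key]
    have step1 : ∫ x in Set.Icc (0:ℝ) 1, (∫ y in Set.Icc (0:ℝ) 1,
        ∫ _ in Set.Icc 0 ((α - m1*x - m2*y)/m3), x)
        = ∫ x in Set.Icc (0:ℝ) 1,
          ((0:ℝ) + (α/m3 - m2/(2*m3))*x + (-(m1/m3))*x^2) := by
      apply setIntegral_congr_fun measurableSet_Icc
      intro x hx
      simp only
      have inner : ∀ y ∈ Set.Icc (0:ℝ) 1,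
          (∫ _ in Set.Icc 0 ((α - m1*x - m2*y)/m3), x)
          = ((α - m1*x)*x/m3 + (-(m2*x/m3))*y + 0*y^2) := by
        intro y hy
        rw [integral_Icc_const _ _ (hc x hx y hy).1]
        ring
      rw [setIntegral_congr_fun measurableSet_Icc inner, integral_Icc01_poly]
      ring
    rw [step1, integral_Icc01_poly]
    ring
  -- Second moment
  have hI2 : ∫ p in S, p.2.1 = (α/m3 - m1/(2*m3))/2 + (-(m2/m3))/3 := by
    rw [hS]
    have key := cut_integral m1 m2 m3 α hm3 hc (fun _ y _ => y)
      (continuous_fst.comp continuous_snd)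
    rw [show (∫ p in {p : ℝ×ℝ×ℝ | p.1 ∈ Set.Icc 0 1 ∧ p.2.1 ∈ Set.Icc 0 1 ∧
        p.2.2 ∈ Set.Icc 0 1 ∧ m1*p.1+m2*p.2.1+m3*p.2.2 ≤ α}, p.2.1)
        = ∫ x in Set.Icc (0:ℝ) 1, ∫ y in Set.Icc (0:ℝ) 1,
          ∫ _ in Set.Icc 0 ((α - m1*x - m2*y)/m3), y from key]
    have step1 : ∫ x in Set.Icc (0:ℝ) 1, (∫ y in Set.Icc (0:ℝ) 1,
        ∫ _ in Set.Icc 0 ((α - m1*x - m2*y)/m3), y)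
        = ∫ x in Set.Icc (0:ℝ) 1,
          ((α/(2*m3) - m2/(3*m3)) + (-(m1/(2*m3)))*x + 0*x^2) := by
      apply setIntegral_congr_fun measurableSet_Icc
      intro x hx
      simp only
      have inner : ∀ y ∈ Set.Icc (0:ℝ) 1,
          (∫ _ in Set.Icc 0 ((α - m1*x - m2*y)/m3), y)
          = ((0:ℝ) + ((α - m1*x)/m3)*y + (-(m2/m3))*y^2) := by
        intro y hy
        rw [integral_Icc_const _ _ (hc x hx y hy).1]
        ring
      rw [setIntegral_congr_fun measurableSet_Icc inner, integral_Icc01_poly]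
      ring
    rw [step1, integral_Icc01_poly]
    field_simp
    ring
  -- Third moment
  have hI3 : ∫ p in S, p.2.2 =
      (α^2/(2*m3^2) - α*m2/(2*m3^2) + m2^2/(6*m3^2))
      + (-(α*m1/m3^2) + m1*m2/(2*m3^2))/2 + (m1^2/(2*m3^2))/3 := by
    rw [hS]
    have key := cut_integral m1 m2 m3 α hm3 hc (fun _ _ z => z)
      (continuous_snd.comp continuous_snd)
    rw [show (∫ p in {p : ℝ×ℝ×ℝ | p.1 ∈ Set.Icc 0 1 ∧ p.2.1 ∈ Set.Icc 0 1 ∧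
        p.2.2 ∈ Set.Icc 0 1 ∧ m1*p.1+m2*p.2.1+m3*p.2.2 ≤ α}, p.2.2)
        = ∫ x in Set.Icc (0:ℝ) 1, ∫ y in Set.Icc (0:ℝ) 1,
          ∫ z in Set.Icc 0 ((α - m1*x - m2*y)/m3), z from key]
    have step1 : ∫ x in Set.Icc (0:ℝ) 1, (∫ y in Set.Icc (0:ℝ) 1,
        ∫ z in Set.Icc 0 ((α - m1*x - m2*y)/m3), z)
        = ∫ x in Set.Icc (0:ℝ) 1,
          ((α^2/(2*m3^2) - α*m2/(2*m3^2) + m2^2/(6*m3^2))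
            + (-(α*m1/m3^2) + m1*m2/(2*m3^2))*x + (m1^2/(2*m3^2))*x^2) := by
      apply setIntegral_congr_fun measurableSet_Icc
      intro x hx
      simp only
      have inner : ∀ y ∈ Set.Icc (0:ℝ) 1,
          (∫ z in Set.Icc 0 ((α - m1*x - m2*y)/m3), z)
          = ((α - m1*x)^2/(2*m3^2) + (-((α - m1*x)*m2/m3^2))*y
              + (m2^2/(2*m3^2))*y^2) := by
        intro y hy
        rw [integral_Icc_id _ (hc x hx y hy).1]
        field_simp
        ring
      rw [setIntegral_congr_fun measurableSet_Icc inner, integral_Icc01_poly]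
      ring
    rw [step1, integral_Icc01_poly]
  refine ⟨?_, ?_, ?_⟩
  · rw [hI1, hV]
    have h2 : (2*α - m1 - m2) ≠ 0 := ne_of_gt hpos
    rw [div_eq_iff hVpos.ne', sub_mul, div_mul_div_comm, div_mul_div_comm, mul_comm 6 (2 * α - m1 - m2), mul_assoc (2 * α - m1 - m2), mul_comm m1, mul_div_mul_left _ _ h2]
    field_simp
    ring
  · rw [hI2, hV]
    have h2 : (2*α - m1 - m2) ≠ 0 := ne_of_gt hpos
    rw [div_eq_iff hVpos.ne', sub_mul, div_mul_div_comm, div_mul_div_comm, mul_comm 6 (2 * α - m1 - m2), mul_assoc (2 * α - m1 - m2), mul_comm m2, mul_div_mul_left _ _ h2]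
    field_simp
    ring
  · rw [hI3, hV]
    have h2 : (2*α - m1 - m2) ≠ 0 := ne_of_gt hpos
    field_simp
    ring
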